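/- arXiv:1003.4222 — 3 statements merged into one kernel-verified Lean document; each statement's English description precedes it below -/
import Mathlib

section
/- Let ν ≥ 1 and k ≥ 0 be integers, let a > b > 0 be real, set c = (a² − b²)/(2b), and for integers j ≥ 0 and μ ≥ 0 put h_j^μ = (π (j+μ)! / (a · j!)) · (a/b)^{2j} · (2a/(a² − b²))^{μ+1}. Then (2ν/a) ∑_{n=0}^{k} h_n^ν + (ν²/c²) ∑_{n=0}^{k} h_n^{ν−1} = ((k+1)ν/c²) · h_{k+1}^{ν−1}. -/
open Real

/-- The squared norm `h_j^μ = (π (j+μ)! / (a j!)) (a/b)^{2j} (2a/(a²−b²))^{μ+1}`. -/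
noncomputable def hnorm (a b : ℝ) (j μ : ℕ) : ℝ :=
  π * (Nat.factorial (j + μ)) / (a * Nat.factorial j) * (a / b) ^ (2 * j) *
    (2 * a / (a ^ 2 - b ^ 2)) ^ (μ + 1)

/-! With `r = 2a/(a²−b²)`, the norms satisfy `h_j^{μ+1} = (j+μ+1) r h_j^μ` and
`(j+1) h_{j+1}^μ = (j+μ+1) (a/b)² h_j^μ`. Since `2r/a + 1/c² = (a/b)²/c²`, these turn the
`n`-th summand of the left-hand side into `(ν/c²) ((n+1) h_{n+1}^{ν−1} − n h_n^{ν−1})`, and the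
sum telescopes. -/

lemma hnorm_succ_right (a b : ℝ) (j μ : ℕ) :
    hnorm a b j (μ + 1) = (j + μ + 1) * (2 * a / (a ^ 2 - b ^ 2)) * hnorm a b j μ := by
  simp only [hnorm, ← add_assoc, Nat.factorial_succ, pow_succ]
  push_cast
  ring

lemma succ_mul_hnorm_succ_left (a b : ℝ) (j μ : ℕ) :
    (j + 1) * hnorm a b (j + 1) μ = (j + μ + 1) * (a / b) ^ 2 * hnorm a b j μ := by
  have hj : (Nat.factorial j : ℝ) ≠ 0 := by positivity
  rw [hnorm, hnorm, add_right_comm, Nat.factorial_succ, Nat.factorial_succ, mul_add_one 2 j,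
    pow_add]
  push_cast
  field_simp

lemma hnorm_summand_telescopes (a b : ℝ) (ha : a ≠ 0) (hb : b ≠ 0) (hab : a ^ 2 - b ^ 2 ≠ 0) (j μ : ℕ) :
    2 * (μ + 1) / a * hnorm a b j (μ + 1) +
        (μ + 1) ^ 2 / ((a ^ 2 - b ^ 2) / (2 * b)) ^ 2 * hnorm a b j μ =
      (μ + 1) / ((a ^ 2 - b ^ 2) / (2 * b)) ^ 2 *
        ((j + 1) * hnorm a b (j + 1) μ - j * hnorm a b j μ) := by
  have ratios : 2 / a * (2 * a / (a ^ 2 - b ^ 2)) + 1 / ((a ^ 2 - b ^ 2) / (2 * b)) ^ 2 =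
      (a / b) ^ 2 / ((a ^ 2 - b ^ 2) / (2 * b)) ^ 2 := by
    field_simp
    ring
  rw [hnorm_succ_right, succ_mul_hnorm_succ_left]
  linear_combination ((μ : ℝ) + 1) * (j + μ + 1) * hnorm a b j μ * ratios

lemma sum_range_succ_mul_sub_mul {R : Type*} [Ring R] (f : ℕ → R) (n : ℕ) :
    ∑ i ∈ Finset.range n, (((i : R) + 1) * f (i + 1) - i * f i) = n * f n := by
  simpa using Finset.sum_range_sub (fun i => (i : R) * f i) n

theorem hnorm_telescoping_identity_general (ν k : ℕ) (a b : ℝ) (hb : 0 < b) (hab : b < a) :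
    (2 * ν / a) * ∑ n ∈ Finset.range (k + 1), hnorm a b n ν +
      ((ν : ℝ) ^ 2 / ((a ^ 2 - b ^ 2) / (2 * b)) ^ 2) * ∑ n ∈ Finset.range (k + 1), hnorm a b n (ν - 1) =
    (((k : ℝ) + 1) * ν / ((a ^ 2 - b ^ 2) / (2 * b)) ^ 2) * hnorm a b (k + 1) (ν - 1) := by
  cases ν with
  | zero => simp
  | succ μ =>
    have ha : a ≠ 0 := (hb.trans hab).ne'
    have hdiff : a ^ 2 - b ^ 2 ≠ 0 := by nlinarith
    rw [Nat.add_sub_cancel, Finset.mul_sum, Finset.mul_sum, ← Finset.sum_add_distrib]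
    push_cast
    simp_rw [hnorm_summand_telescopes a b ha hb.ne' hdiff]
    rw [← Finset.mul_sum, sum_range_succ_mul_sub_mul (hnorm a b · μ)]
    push_cast
    ring

theorem hnorm_telescoping_identity (ν k : ℕ) (hν : 1 ≤ ν) (a b : ℝ) (hb : 0 < b) (hab : b < a) :
    (2 * ν / a) * ∑ n ∈ Finset.range (k + 1), hnorm a b n ν +
      ((ν : ℝ) ^ 2 / ((a ^ 2 - b ^ 2) / (2 * b)) ^ 2) * ∑ n ∈ Finset.range (k + 1), hnorm a b n (ν - 1) =
    (((k : ℝ) + 1) * ν / ((a ^ 2 - b ^ 2) / (2 * b)) ^ 2) * hnorm a b (k + 1) (ν - 1) :=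
  hnorm_telescoping_identity_general ν k a b hb hab
end

section
/- For all integers k ≥ 0 and α ≥ 0, every nonzero complex number z, and every radius 0 < r < 1, one has k! L_k^α(z) / (k+α)! = (1/(2πi (−z)^α)) ∮_{|u|=r} (1−u)^{α−1} u^{−(k+1+α)} e^{−z u/(1−u)} du, where (−z)^α is the α-th integer power of −z. -/
open MeasureTheory Complex Real Filter

/-- Generalized Laguerre polynomial `L_k^α(z)` as a function of a complex variable. -/
noncomputable def Lag (k α : ℕ) (z : ℂ) : ℂ :=
  ∑ m ∈ Finset.range (k + 1),
    ((-1 : ℂ) ^ m / (Nat.factorial m)) * (Nat.choose (k + α) (k - m)) * z ^ m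

open Metric

/-!
Expanding `exp (-z u / (1 - u)) = ∑ₘ (-z)ᵐ uᵐ (1 - u)⁻ᵐ / m!`, a series converging uniformly on
the circle, and integrating termwise turns the right-hand side into
`∑ₘ (-z)ᵐ / m! ∮ u ^ (m - k - 1 - α) (1 - u) ^ (α - 1 - m) du`.
Splitting `uⁿ (1 - u)ᵐ⁻¹ = uⁿ (1 - u)ᵐ + uⁿ⁺¹ (1 - u)ᵐ⁻¹` shows that these integrals obey Pascal's
rule, so `∮ u⁻ᵃ⁻¹ (1 - u)⁻ᵇ⁻¹ du = 2πi (a + b choose a)`, while they vanish when the integrand is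
holomorphic in the disc or when `m < α` (then `(1 - u)^(α - 1 - m)` is a polynomial of too small
degree to produce a `u⁻¹` term). Only `m = α + j` with `j ≤ k` survives, contributing
`2πi (-z)^(α + j) (k choose j) / (α + j)!`, which is `2πi (-z)^α k! / (k + α)!` times the `j`-th
term of `L_k^α(z)`.
-/

theorem hasSum_circleIntegral_of_norm_le {ι E : Type*} [Countable ι] [NormedAddCommGroup E]
    [NormedSpace ℂ E] [CompleteSpace E] {F : ι → ℂ → E} {g : ℂ → E} {bound : ι → ℝ}
    {c : ℂ} {R : ℝ} (hR : 0 ≤ R) (hF : ∀ i, ContinuousOn (F i) (sphere c R))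
    (h_bound : Summable bound) (hF_le : ∀ i, ∀ w ∈ sphere c R, ‖F i w‖ ≤ bound i)
    (hg : ∀ w ∈ sphere c R, HasSum (F · w) (g w)) :
    HasSum (fun i ↦ ∮ w in C(c, R), F i w) (∮ w in C(c, R), g w) := by
  have h := (tendstoUniformlyOn_tsum h_bound hF_le).tendsto_circleIntegral_of_continuousOn hR
    (Eventually.of_forall fun s ↦ continuousOn_finsetSum s fun i _ ↦ hF i)
  rw [circleIntegral.integral_congr hR fun w hw ↦ (hg w hw).tsum_eq] at h
  refine h.congr fun s ↦ ?_
  exact circleIntegral.integral_fun_sum fun i _ ↦ (hF i).circleIntegrable hR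

theorem hasSum_circleIntegral_mul_exp {g q : ℂ → ℂ} {c : ℂ} {R : ℝ} (hR : 0 ≤ R)
    (hg : ContinuousOn g (sphere c R)) (hq : ContinuousOn q (sphere c R)) :
    HasSum (fun m : ℕ ↦ ∮ w in C(c, R), g w * (q w ^ m / m.factorial))
      (∮ w in C(c, R), g w * exp (q w)) := by
  obtain ⟨C, hC⟩ := (isCompact_sphere c R).exists_bound_of_continuousOn hg
  obtain ⟨ρ, hρ⟩ := (isCompact_sphere c R).exists_bound_of_continuousOn hq
  refine hasSum_circleIntegral_of_norm_le hR
    (fun m ↦ hg.mul ((hq.pow m).div_const _)) ((summable_pow_div_factorial ρ).mul_left C)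
    (fun m w hw ↦ ?_) (fun w _ ↦ ?_)
  · rw [norm_mul, norm_div, norm_pow, Complex.norm_natCast]
    gcongr
    · exact (norm_nonneg _).trans (hC w hw)
    · exact hC w hw
    · exact hρ w hw
  · rw [Complex.exp_eq_exp_ℂ]
    exact (NormedSpace.expSeries_div_hasSum_exp (q w)).mul_left (g w)

section

variable {r : ℝ}

theorem one_sub_ne_zero_of_norm_lt_one {u : ℂ} (hu : ‖u‖ < 1) : 1 - u ≠ 0 := by
  rw [sub_ne_zero]
  rintro rfl
  simp at hu

theorem ne_zero_and_one_sub_ne_zero_of_mem_sphere (hr0 : 0 < r) (hr1 : r < 1) {u : ℂ}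
    (hu : u ∈ sphere 0 r) : u ≠ 0 ∧ 1 - u ≠ 0 := by
  rw [mem_sphere_zero_iff_norm] at hu
  exact ⟨norm_pos_iff.1 (hu ▸ hr0), one_sub_ne_zero_of_norm_lt_one (hu ▸ hr1)⟩

theorem continuousOn_zpow_mul_one_sub_zpow (hr0 : 0 < r) (hr1 : r < 1) (n m : ℤ) :
    ContinuousOn (fun u : ℂ ↦ u ^ n * (1 - u) ^ m) (sphere 0 r) := by
  intro u hu
  obtain ⟨hu0, hu1⟩ := ne_zero_and_one_sub_ne_zero_of_mem_sphere hr0 hr1 hu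
  fun_prop (disch := simp [hu0, hu1])

theorem circleIntegral_natCast_zpow_mul_one_sub_zpow (hr0 : 0 ≤ r) (hr1 : r < 1) (n : ℕ)
    (m : ℤ) : ∮ u in C(0, r), u ^ (n : ℤ) * (1 - u) ^ m = 0 := by
  have hd : DifferentiableOn ℂ (fun u : ℂ ↦ u ^ (n : ℤ) * (1 - u) ^ m) (closedBall 0 r) := by
    intro u hu
    have hu1 : 1 - u ≠ 0 :=
      one_sub_ne_zero_of_norm_lt_one ((mem_closedBall_zero_iff.1 hu).trans_lt hr1)
    simp only [zpow_natCast]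
    fun_prop (disch := simp [hu1])
  exact (DiffContOnCl.mk_ball (hd.mono ball_subset_closedBall) hd.continuousOn)
    |>.circleIntegral_eq_zero hr0

theorem circleIntegral_zpow_mul_one_sub_zpow_zero_of_lt {n : ℤ} (hn : n < -1) :
    ∮ u in C(0, r), u ^ n * (1 - u) ^ (0 : ℤ) = 0 := by
  simpa using circleIntegral.integral_sub_zpow_of_ne hn.ne (0 : ℂ) 0 r

theorem circleIntegral_zpow_neg_one_mul_one_sub_zpow_zero (hr0 : 0 < r) :
    ∮ u in C(0, r), u ^ (-1 : ℤ) * (1 - u) ^ (0 : ℤ) = 2 * π * I := by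
  simpa using circleIntegral.integral_sub_center_inv (0 : ℂ) hr0.ne'

theorem circleIntegral_zpow_mul_one_sub_zpow_sub_one (hr0 : 0 < r) (hr1 : r < 1) (n m : ℤ) :
    ∮ u in C(0, r), u ^ n * (1 - u) ^ (m - 1) =
      (∮ u in C(0, r), u ^ n * (1 - u) ^ m) +
        ∮ u in C(0, r), u ^ (n + 1) * (1 - u) ^ (m - 1) := by
  rw [← circleIntegral.integral_add
    ((continuousOn_zpow_mul_one_sub_zpow hr0 hr1 _ _).circleIntegrable hr0.le)
    ((continuousOn_zpow_mul_one_sub_zpow hr0 hr1 _ _).circleIntegrable hr0.le)]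
  refine circleIntegral.integral_congr hr0.le fun u hu ↦ ?_
  obtain ⟨hu0, hu1⟩ := ne_zero_and_one_sub_ne_zero_of_mem_sphere hr0 hr1 hu
  simp only [zpow_add_one₀ hu0, zpow_sub_one₀ hu1]
  field_simp
  ring

theorem circleIntegral_zpow_mul_one_sub_pow_eq_zero (hr0 : 0 < r) (hr1 : r < 1) (t : ℕ)
    {n : ℤ} (hn : n + t < -1) : ∮ u in C(0, r), u ^ n * (1 - u) ^ (t : ℤ) = 0 := by
  induction t generalizing n with
  | zero => exact circleIntegral_zpow_mul_one_sub_zpow_zero_of_lt (by simpa using hn)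
  | succ t ih =>
    have h := circleIntegral_zpow_mul_one_sub_zpow_sub_one hr0 hr1 n (t + 1)
    rw [add_sub_cancel_right, ih (by omega), ih (by omega)] at h
    push_cast
    linear_combination -h

theorem circleIntegral_zpow_mul_one_sub_zpow_eq_choose (hr0 : 0 < r) (hr1 : r < 1)
    (a b : ℕ) :
    ∮ u in C(0, r), u ^ (-(a + 1 : ℤ)) * (1 - u) ^ (-(b + 1 : ℤ)) =
      2 * π * I * (a + b).choose a := by
  suffices h : ∀ n m : ℤ, n = -(a + 1) → m = -(b + 1) →
      ∮ u in C(0, r), u ^ n * (1 - u) ^ m = 2 * π * I * (a + b).choose a from h _ _ rfl rfl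
  induction b generalizing a with
  | zero =>
    induction a with
    | zero =>
      intro n m hn hm
      rw [← add_sub_cancel_right m 1, circleIntegral_zpow_mul_one_sub_zpow_sub_one hr0 hr1,
        show m + 1 = 0 by omega, show n = -1 by omega,
        circleIntegral_zpow_neg_one_mul_one_sub_zpow_zero hr0,
        show (-1 + 1 : ℤ) = (0 : ℕ) by norm_num,
        circleIntegral_natCast_zpow_mul_one_sub_zpow hr0.le hr1]
      simp
    | succ a ih =>
      intro n m hn hm
      rw [← add_sub_cancel_right m 1, circleIntegral_zpow_mul_one_sub_zpow_sub_one hr0 hr1,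
        show m + 1 = 0 by omega, circleIntegral_zpow_mul_one_sub_zpow_zero_of_lt (by omega),
        zero_add, ih _ _ (by omega) (by omega)]
      simp
  | succ b ihb =>
    induction a with
    | zero =>
      intro n m hn hm
      rw [← add_sub_cancel_right m 1, circleIntegral_zpow_mul_one_sub_zpow_sub_one hr0 hr1,
        ihb 0 _ _ hn (by omega), show n + 1 = (0 : ℕ) by omega,
        circleIntegral_natCast_zpow_mul_one_sub_zpow hr0.le hr1]
      simp
    | succ a iha =>
      intro n m hn hm
      rw [← add_sub_cancel_right m 1, circleIntegral_zpow_mul_one_sub_zpow_sub_one hr0 hr1,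
        ihb (a + 1) _ _ hn (by omega), iha _ _ (by omega) (by omega),
        show a + 1 + (b + 1) = a + b + 1 + 1 by omega, Nat.choose_succ_succ',
        show a + 1 + b = a + b + 1 by omega, show a + (b + 1) = a + b + 1 by omega]
      push_cast
      ring

theorem circleIntegral_laguerre_term (hr0 : 0 < r) (hr1 : r < 1) (k α m : ℕ) :
    ∮ u in C(0, r), u ^ (-((k : ℤ) + 1 + α) + m) * (1 - u) ^ ((α : ℤ) - 1 - m) =
      if α ≤ m then 2 * π * I * k.choose (m - α) else 0 := by
  rcases lt_or_ge m α with hmα | hαm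
  · rw [if_neg (by omega), show (α : ℤ) - 1 - m = (α - 1 - m : ℕ) by omega]
    exact circleIntegral_zpow_mul_one_sub_pow_eq_zero hr0 hr1 _ (by omega)
  rw [if_pos hαm]
  rcases le_or_gt m (k + α) with hmk | hkm
  · rw [show -((k : ℤ) + 1 + α) + m = -((k + α - m : ℕ) + 1) by omega,
      show (α : ℤ) - 1 - m = -((m - α : ℕ) + 1) by omega,
      circleIntegral_zpow_mul_one_sub_zpow_eq_choose hr0 hr1,
      show k + α - m + (m - α) = k by omega,
      show k + α - m = k - (m - α) by omega, Nat.choose_symm (by omega)]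
  · rw [show -((k : ℤ) + 1 + α) + m = (m - (k + 1 + α) : ℕ) by omega,
      circleIntegral_natCast_zpow_mul_one_sub_zpow hr0.le hr1, Nat.choose_eq_zero_of_lt (by omega)]
    simp

end

theorem one_sub_zpow_mul_zpow_mul_pow_div_factorial {u : ℂ} (hu0 : u ≠ 0) (hu1 : 1 - u ≠ 0)
    (w : ℂ) (p n : ℤ) (m : ℕ) :
    (1 - u) ^ p * u ^ n * ((w * u / (1 - u)) ^ m / m.factorial) =
      w ^ m / m.factorial * (u ^ (n + m) * (1 - u) ^ (p - m)) := by
  rw [zpow_add₀ hu0, zpow_sub₀ hu1, zpow_natCast, zpow_natCast, div_pow, mul_pow]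
  field_simp

theorem hasSum_pow_div_factorial_mul_ite_choose (w : ℂ) (k α : ℕ) :
    HasSum (fun m ↦ w ^ m / m.factorial * if α ≤ m then (k.choose (m - α) : ℂ) else 0)
      (w ^ α * ∑ j ∈ Finset.range (k + 1), w ^ j * k.choose j / (α + j).factorial) := by
  set f : ℕ → ℂ := fun m ↦ w ^ m / m.factorial * if α ≤ m then (k.choose (m - α) : ℂ) else 0
  have hf : ∀ m ∉ Finset.range (α + (k + 1)), f m = 0 := by
    intro m hm
    rw [Finset.mem_range, not_lt] at hm
    simp [f, Nat.choose_eq_zero_of_lt (show k < m - α by omega)]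
  have h_lt : ∑ m ∈ Finset.range α, f m = 0 :=
    Finset.sum_eq_zero fun m hm ↦ by simp [f, Finset.mem_range.1 hm]
  suffices h : ∑ m ∈ Finset.range (α + (k + 1)), f m =
      w ^ α * ∑ j ∈ Finset.range (k + 1), w ^ j * k.choose j / (α + j).factorial from
    h ▸ hasSum_sum_of_ne_finset_zero hf
  rw [Finset.sum_range_add f α (k + 1), h_lt, zero_add, Finset.mul_sum]
  refine Finset.sum_congr rfl fun j _ ↦ ?_
  simp only [f, if_pos (Nat.le_add_right α j), add_tsub_cancel_left, pow_add]
  ring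

theorem factorial_mul_Lag_div_factorial (k α : ℕ) (z : ℂ) :
    k.factorial * Lag k α z / (k + α).factorial =
      ∑ j ∈ Finset.range (k + 1), (-z) ^ j * k.choose j / (α + j).factorial := by
  rw [Lag, Finset.mul_sum, Finset.sum_div]
  refine Finset.sum_congr rfl fun j hj ↦ ?_
  have hjk : j ≤ k := Nat.lt_succ_iff.1 (Finset.mem_range.1 hj)
  rw [Nat.cast_choose ℂ hjk, Nat.cast_choose ℂ (show k - j ≤ k + α by omega),
    show k + α - (k - j) = α + j by omega, neg_pow z]
  have : ((k + α).factorial : ℂ) ≠ 0 := Nat.cast_ne_zero.2 (Nat.factorial_ne_zero _)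
  field_simp

theorem laguerre_contour_representation_second (k α : ℕ) (z : ℂ) (hz : z ≠ 0) (r : ℝ)
    (hr0 : 0 < r) (hr1 : r < 1) :
    (Nat.factorial k : ℂ) * Lag k α z / (Nat.factorial (k + α)) =
      (1 / (2 * (π : ℂ) * Complex.I * (-z) ^ α)) *
        ∮ u in C(0, r),
          (1 - u) ^ ((α : ℤ) - 1) * u ^ (-((k : ℤ) + 1 + (α : ℤ))) *
            Complex.exp (-z * u / (1 - u)) := by
  set g : ℂ → ℂ := fun u ↦ (1 - u) ^ ((α : ℤ) - 1) * u ^ (-((k : ℤ) + 1 + (α : ℤ)))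
  set q : ℂ → ℂ := fun u ↦ -z * u / (1 - u)
  have hg : ContinuousOn g (sphere 0 r) := fun u hu ↦ by
    obtain ⟨hu0, hu1⟩ := ne_zero_and_one_sub_ne_zero_of_mem_sphere hr0 hr1 hu
    fun_prop (disch := simp [hu0, hu1])
  have hq : ContinuousOn q (sphere 0 r) := fun u hu ↦ by
    obtain ⟨-, hu1⟩ := ne_zero_and_one_sub_ne_zero_of_mem_sphere hr0 hr1 hu
    fun_prop (disch := exact hu1)
  have hterm (m : ℕ) : ∮ u in C(0, r), g u * (q u ^ m / m.factorial) =
      2 * π * I * ((-z) ^ m / m.factorial * if α ≤ m then (k.choose (m - α) : ℂ) else 0) := by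
    rw [circleIntegral.integral_congr hr0.le fun u hu ↦
      have ⟨hu0, hu1⟩ := ne_zero_and_one_sub_ne_zero_of_mem_sphere hr0 hr1 hu
      one_sub_zpow_mul_zpow_mul_pow_div_factorial hu0 hu1 (-z) _ _ m,
      circleIntegral.integral_const_mul, circleIntegral_laguerre_term hr0 hr1]
    split_ifs <;> ring
  have hsum := (hasSum_pow_div_factorial_mul_ite_choose (-z) k α).mul_left (2 * π * I)
  rw [← funext hterm] at hsum
  rw [(hasSum_circleIntegral_mul_exp hr0.le hg hq).unique hsum, factorial_mul_Lag_div_factorial]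
  have hzα : (-z) ^ α ≠ 0 := pow_ne_zero _ (neg_ne_zero.2 hz)
  field_simp
end

section
/- For every real ρ > 0 and all complex numbers A, B, the absolutely convergent double integral satisfies ∫_ℝ ∫_ℝ exp(−(t² + s²)/2 + A s + B t)/(ρ + i(s − t)) ds dt = 2π e^{(A² + B²)/2} ∫_0^∞ exp(−u² − u(ρ + i(A − B))) du. -/
open MeasureTheory Complex Real Filter Set

/-!
Write the denominator `c = ρ + i(s - t)`, which has `Re c = ρ > 0`, as a Laplace transform,
`1 / c = ∫₀^∞ e^{-cu} du`. The resulting triple integral is absolutely convergent, so Fubini lets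
the `u`-integral go outside. For fixed `u` the factor `e^{-cu}` only shifts the linear
coefficients of the Gaussian to `A - iu` and `B + iu`, and the two one-dimensional Gaussian
integrals give
`2π e^{((A - iu)² + (B + iu)²)/2} e^{-ρu} = 2π e^{(A² + B²)/2} e^{-u² - u(ρ + i(A - B))}`.
-/

lemma integral_cexp_neg_mul_Ioi {c : ℂ} (hc : 0 < c.re) :
    ∫ u : ℝ in Ioi 0, cexp (-(c * u)) = c⁻¹ := by
  simpa [← neg_mul, neg_div, div_neg] using
    integral_exp_mul_complex_Ioi (a := -c) (by simpa using hc) 0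

section LaplaceRepresentation

variable {α : Type*} [MeasurableSpace α] {μ : Measure α} {f c : α → ℂ} {ρ : ℝ}

lemma MeasureTheory.Integrable.div_of_le_re (hf : Integrable f μ) (hc : AEStronglyMeasurable c μ)
    (hρ : 0 < ρ) (hcre : ∀ x, ρ ≤ (c x).re) : Integrable (fun x => f x / c x) μ := by
  refine hf.mul_bdd (c := ρ⁻¹) hc.aemeasurable.inv.aestronglyMeasurable
    (Eventually.of_forall fun x => ?_)
  rw [norm_inv]
  exact inv_anti₀ hρ ((hcre x).trans (re_le_norm _))

lemma MeasureTheory.Integrable.mul_cexp_neg_mul_prod (hf : Integrable f μ)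
    (hc : AEStronglyMeasurable c μ) (hρ : 0 < ρ) (hcre : ∀ x, ρ ≤ (c x).re) :
    Integrable (fun q : α × ℝ => f q.1 * cexp (-(c q.1 * q.2)))
      (μ.prod (volume.restrict (Ioi 0))) := by
  refine Integrable.mono' (hf.norm.mul_prod (exp_neg_integrableOn_Ioi 0 hρ)) ?_ ?_
  · exact hf.aestronglyMeasurable.comp_fst.mul <| continuous_exp.comp_aestronglyMeasurable
      (hc.comp_fst.mul (measurable_ofReal.comp measurable_snd).aestronglyMeasurable).neg
  · filter_upwards [Measure.quasiMeasurePreserving_snd.ae (ae_restrict_mem measurableSet_Ioi)]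
      with ⟨x, u⟩ (hu : 0 < u)
    rw [norm_mul, norm_exp]
    gcongr
    simpa using mul_le_mul_of_nonneg_right (hcre x) hu.le

lemma integral_div_eq_integral_Ioi_integral_mul_cexp [SFinite μ] (hf : Integrable f μ)
    (hc : AEStronglyMeasurable c μ) (hρ : 0 < ρ) (hcre : ∀ x, ρ ≤ (c x).re) :
    ∫ x, f x / c x ∂μ = ∫ u : ℝ in Ioi 0, ∫ x, f x * cexp (-(c x * u)) ∂μ := by
  calc ∫ x, f x / c x ∂μ = ∫ x, (∫ u : ℝ in Ioi 0, f x * cexp (-(c x * u))) ∂μ := by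
        congr 1 with x
        rw [integral_const_mul, integral_cexp_neg_mul_Ioi (hρ.trans_le (hcre x)), div_eq_mul_inv]
    _ = _ := integral_integral_swap (hf.mul_cexp_neg_mul_prod hc hρ hcre)

end LaplaceRepresentation

lemma integrable_cexp_neg_sq_div_two_add_mul (b : ℂ) :
    Integrable (fun x : ℝ => cexp (-(x : ℂ) ^ 2 / 2 + b * x)) := by
  simpa [neg_div, div_eq_inv_mul] using integrable_cexp_quadratic (b := 1 / 2) (by norm_num) b 0

lemma integral_cexp_neg_sq_div_two_add_mul (b : ℂ) :
    ∫ x : ℝ, cexp (-(x : ℂ) ^ 2 / 2 + b * x) = (2 * π : ℂ) ^ (1 / 2 : ℂ) * cexp (b ^ 2 / 2) := by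
  convert integral_cexp_quadratic (b := -1 / 2) (by norm_num) b 0 using 3 with x
  · ring_nf
  all_goals ring

lemma cexp_neg_sq_div_two_prod_eq_mul (a b : ℂ) (p : ℝ × ℝ) :
    cexp (-((p.1 : ℂ) ^ 2 + (p.2 : ℂ) ^ 2) / 2 + a * p.2 + b * p.1) =
      cexp (-(p.1 : ℂ) ^ 2 / 2 + b * p.1) * cexp (-(p.2 : ℂ) ^ 2 / 2 + a * p.2) := by
  rw [← Complex.exp_add]
  ring_nf

lemma integrable_cexp_neg_sq_div_two_prod (a b : ℂ) :
    Integrable (fun p : ℝ × ℝ =>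
      cexp (-((p.1 : ℂ) ^ 2 + (p.2 : ℂ) ^ 2) / 2 + a * p.2 + b * p.1)) := by
  simp_rw [cexp_neg_sq_div_two_prod_eq_mul]
  exact (integrable_cexp_neg_sq_div_two_add_mul b).mul_prod
    (integrable_cexp_neg_sq_div_two_add_mul a)

lemma integral_cexp_neg_sq_div_two_prod (a b : ℂ) :
    ∫ p : ℝ × ℝ, cexp (-((p.1 : ℂ) ^ 2 + (p.2 : ℂ) ^ 2) / 2 + a * p.2 + b * p.1) =
      2 * π * cexp ((a ^ 2 + b ^ 2) / 2) := by
  have h2π : (2 * π : ℂ) ≠ 0 := by exact_mod_cast (by positivity : (2 * π) ≠ 0)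
  simp_rw [cexp_neg_sq_div_two_prod_eq_mul, Measure.volume_eq_prod]
  rw [integral_prod_mul (fun t : ℝ => cexp (-(t : ℂ) ^ 2 / 2 + b * t))
    (fun s : ℝ => cexp (-(s : ℂ) ^ 2 / 2 + a * s)), integral_cexp_neg_sq_div_two_add_mul,
    integral_cexp_neg_sq_div_two_add_mul, mul_mul_mul_comm, ← cpow_add _ _ h2π, add_halves,
    cpow_one, ← Complex.exp_add]
  ring_nf

lemma integral_cexp_neg_sq_div_two_prod_mul_cexp_neg_mul (ρ u : ℝ) (A B : ℂ) :
    ∫ p : ℝ × ℝ, cexp (-((p.1 : ℂ) ^ 2 + (p.2 : ℂ) ^ 2) / 2 + A * p.2 + B * p.1) *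
        cexp (-(((ρ : ℂ) + I * ((p.2 : ℂ) - p.1)) * u)) =
      2 * π * cexp ((A ^ 2 + B ^ 2) / 2) * cexp (-(u : ℂ) ^ 2 - u * (ρ + I * (A - B))) := by
  have hshift : ∀ p : ℝ × ℝ,
      cexp (-((p.1 : ℂ) ^ 2 + (p.2 : ℂ) ^ 2) / 2 + A * p.2 + B * p.1) *
        cexp (-(((ρ : ℂ) + I * ((p.2 : ℂ) - p.1)) * u)) =
      cexp (-((p.1 : ℂ) ^ 2 + (p.2 : ℂ) ^ 2) / 2 + (A - I * u) * p.2 + (B + I * u) * p.1) *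
        cexp (-(ρ * u)) := by
    intro p
    rw [← Complex.exp_add, ← Complex.exp_add]
    ring_nf
  simp_rw [hshift, integral_mul_const, integral_cexp_neg_sq_div_two_prod, mul_assoc,
    ← Complex.exp_add]
  congr 3
  linear_combination (u : ℂ) ^ 2 * I_sq

theorem gaussian_double_integral_identity (ρ : ℝ) (hρ : 0 < ρ) (A B : ℂ) :
    MeasureTheory.Integrable
      (fun p : ℝ × ℝ =>
        Complex.exp (-(((p.1 : ℂ)) ^ 2 + ((p.2 : ℂ)) ^ 2) / 2 + A * (p.2 : ℂ) + B * (p.1 : ℂ)) /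
          ((ρ : ℂ) + Complex.I * ((p.2 : ℂ) - (p.1 : ℂ)))) ∧
    (∫ t : ℝ, ∫ s : ℝ,
        Complex.exp (-(((t : ℂ)) ^ 2 + ((s : ℂ)) ^ 2) / 2 + A * (s : ℂ) + B * (t : ℂ)) /
          ((ρ : ℂ) + Complex.I * ((s : ℂ) - (t : ℂ)))) =
      2 * (π : ℂ) * Complex.exp ((A ^ 2 + B ^ 2) / 2) *
        ∫ u in Set.Ioi (0 : ℝ),
          Complex.exp (-((u : ℂ)) ^ 2 - (u : ℂ) * ((ρ : ℂ) + Complex.I * (A - B))) := by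
  have hc : Continuous fun p : ℝ × ℝ => (ρ : ℂ) + I * ((p.2 : ℂ) - p.1) := by fun_prop
  have hcre : ∀ p : ℝ × ℝ, ρ ≤ ((ρ : ℂ) + I * ((p.2 : ℂ) - p.1)).re := by simp
  have hf := integrable_cexp_neg_sq_div_two_prod A B
  have hint := hf.div_of_le_re hc.aestronglyMeasurable hρ hcre
  refine ⟨hint, ?_⟩
  rw [integral_integral hint, ← Measure.volume_eq_prod,
    integral_div_eq_integral_Ioi_integral_mul_cexp hf hc.aestronglyMeasurable hρ hcre]
  simp_rw [integral_cexp_neg_sq_div_two_prod_mul_cexp_neg_mul]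
  exact integral_const_mul _ _
end
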